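/- arXiv:2003.12666 — 2 statements merged into one kernel-verified Lean document; each statement's English description precedes it below -/
import Mathlib

section
/- Let A ∈ ℝ^{I×F} and B ∈ ℝ^{J×F} be matrices with Kruskal ranks k_A and k_B, where neither A nor B has a zero column. Then the Kruskal rank of the Khatri-Rao product A ⊙ B ∈ ℝ^{IJ×F} satisfies k_{A⊙B} ≥ min(k_A + k_B − 1, F). -/
/-- The Kruskal rank of a matrix: the largest `k ≤ F` such that every set of `k`
columns is linearly independent. -/
noncomputable def kruskalRank {m : Type*} {F : ℕ} (A : Matrix m (Fin F) ℝ) : ℕ :=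
  sSup {k : ℕ | k ≤ F ∧ ∀ s : Finset (Fin F), s.card = k →
    LinearIndependent ℝ (fun j : s => fun i => A i (j : Fin F))}

/-- The Khatri-Rao (column-wise Kronecker) product. -/
def khatriRao {I J : Type*} {F : ℕ} (A : Matrix I (Fin F) ℝ) (B : Matrix J (Fin F) ℝ) :
    Matrix (I × J) (Fin F) ℝ :=
  fun p f => A p.1 f * B p.2 f

/-!
A vanishing combination `∑ f ∈ T, c f • (a_f ⊗ b_f)` of columns of `A ⊙ B`, with all `c f ≠ 0`,
says `A_T · diag c · B_Tᵀ = 0`. By Sylvester's inequality `rank A_T + rank B_T ≤ |T|`, whereas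
the Kruskal ranks give `rank A_T ≥ min(k_A, |T|)` and `rank B_T ≥ min(k_B, |T|)`. Since
`k_A, k_B ≥ 1` (no zero columns), this is impossible when `1 ≤ |T| < k_A + k_B`.
-/

open Matrix Finset

section KruskalRank

variable {m : Type*} {F : ℕ} (A : Matrix m (Fin F) ℝ)

theorem le_kruskalRank {k : ℕ} (hk : k ≤ F)
    (h : ∀ s : Finset (Fin F), #s = k → LinearIndepOn ℝ A.col (s : Set (Fin F))) :
    k ≤ kruskalRank A :=
  le_csSup ⟨F, fun _ hk => hk.1⟩ ⟨hk, h⟩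

theorem kruskalRank_spec :
    kruskalRank A ≤ F ∧
      ∀ s : Finset (Fin F), #s = kruskalRank A → LinearIndepOn ℝ A.col (s : Set (Fin F)) :=
  Nat.sSup_mem (s := {k | k ≤ F ∧
      ∀ s : Finset (Fin F), #s = k → LinearIndepOn ℝ A.col (s : Set (Fin F))})
    ⟨0, Nat.zero_le F, fun s hs => by simp [card_eq_zero.mp hs]⟩ ⟨F, fun _ hk => hk.1⟩

theorem linearIndepOn_col_of_card_le_kruskalRank {s : Finset (Fin F)}
    (hs : #s ≤ kruskalRank A) : LinearIndepOn ℝ A.col (s : Set (Fin F)) := by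
  obtain ⟨hle, hindep⟩ := kruskalRank_spec A
  obtain ⟨t, hst, -, ht⟩ := exists_subsuperset_card_eq (subset_univ s) hs (by simpa using hle)
  exact (hindep t ht).mono (coe_subset.mpr hst)

theorem one_le_kruskalRank (hF : 0 < F) (hA : ∀ f, A.col f ≠ 0) : 1 ≤ kruskalRank A :=
  le_kruskalRank A hF fun s hs => by
    obtain ⟨f, rfl⟩ := card_eq_one.mp hs
    rw [coe_singleton]
    exact .singleton (hA f)

theorem min_kruskalRank_card_le_rank_submatrix [Fintype m] (T : Finset (Fin F)) :
    min (kruskalRank A) #T ≤ (A.submatrix id ((↑) : T → Fin F)).rank := by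
  obtain ⟨U, hUT, hU⟩ := exists_subset_card_eq (min_le_right (kruskalRank A) #T)
  set AT := Aᵀ.submatrix ((↑) : T → Fin F) id
  have hindep : LinearIndependent ℝ (AT.submatrix (fun u : U => ⟨u, hUT u.2⟩) id).row :=
    linearIndepOn_col_of_card_le_kruskalRank A (hU.le.trans (min_le_left _ _))
  calc min (kruskalRank A) #T = (AT.submatrix (fun u : U => ⟨u, hUT u.2⟩) id).rank := by
        rw [hindep.rank_matrix, Fintype.card_coe, hU]
    _ ≤ AT.rank := rank_submatrix_le _ _ _
    _ = (A.submatrix id ((↑) : T → Fin F)).rank := by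
        rw [← rank_transpose, transpose_submatrix, transpose_transpose]

end KruskalRank

section KhatriRao

variable {I J : Type*} {F : ℕ} (A : Matrix I (Fin F) ℝ) (B : Matrix J (Fin F) ℝ)

theorem submatrix_mul_diagonal_mul_transpose_eq_zero {l : Fin F →₀ ℝ}
    (hl : Finsupp.linearCombination ℝ (khatriRao A B).col l = 0) :
    A.submatrix id ((↑) : l.support → Fin F) *
      (diagonal (fun t : l.support => l t) * (B.submatrix id ((↑) : l.support → Fin F))ᵀ) = 0 := by
  ext i j
  have hij := congrFun hl (i, j)
  simp only [Finsupp.linearCombination_apply, Finsupp.sum, Finset.sum_apply, Pi.smul_apply,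
    col_apply, khatriRao, smul_eq_mul, Pi.zero_apply] at hij
  rw [mul_apply, Matrix.zero_apply]
  simp only [diagonal_mul, submatrix_apply, transpose_apply, id_eq]
  rw [sum_coe_sort l.support (fun f => A i f * (l f * B j f))]
  simpa only [mul_left_comm] using hij

theorem linearIndepOn_khatriRao_col_of_card_lt [Fintype I] [Fintype J]
    (hkA : 1 ≤ kruskalRank A) (hkB : 1 ≤ kruskalRank B) {s : Finset (Fin F)}
    (hs : #s < kruskalRank A + kruskalRank B) :
    LinearIndepOn ℝ (khatriRao A B).col (s : Set (Fin F)) := by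
  refine linearIndepOn_iff.mpr fun l hls hl => ?_
  by_contra hl0
  have hsupp_pos : 0 < #l.support := card_pos.mpr (Finsupp.support_nonempty_iff.mpr hl0)
  have hsupp_le : #l.support ≤ #s :=
    card_le_card (coe_subset.mp ((Finsupp.mem_supported ℝ l).mp hls))
  have hdet : IsUnit (diagonal (fun t : l.support => l t)).det := by
    rw [det_diagonal, isUnit_iff_ne_zero, prod_ne_zero_iff]
    exact fun t _ => Finsupp.mem_support_iff.mp t.2
  have hrank := rank_add_rank_le_card_of_mul_eq_zero
    (submatrix_mul_diagonal_mul_transpose_eq_zero A B hl)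
  rw [rank_mul_eq_right_of_isUnit_det _ _ hdet, rank_transpose, Fintype.card_coe] at hrank
  have hrA := min_kruskalRank_card_le_rank_submatrix A l.support
  have hrB := min_kruskalRank_card_le_rank_submatrix B l.support
  omega

end KhatriRao

theorem stmt_3 (I J F : ℕ)
    (A : Matrix (Fin I) (Fin F) ℝ) (B : Matrix (Fin J) (Fin F) ℝ)
    (hA : ∀ f, (fun i => A i f) ≠ 0) (hB : ∀ f, (fun j => B j f) ≠ 0) :
    min (kruskalRank A + kruskalRank B - 1) F ≤ kruskalRank (khatriRao A B) := by
  rcases Nat.eq_zero_or_pos F with rfl | hF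
  · simp
  have hkA := one_le_kruskalRank A hF hA
  have hkB := one_le_kruskalRank B hF hB
  refine le_kruskalRank _ (min_le_right _ _) fun s hs => ?_
  exact linearIndepOn_khatriRao_col_of_card_lt A B hkA hkB (by omega)
end

section
/- Let A ∈ ℝ^{I×F} and B ∈ ℝ^{J×F}, and suppose A ⊙ B denotes their Khatri-Rao product in ℝ^{IJ×F}. If both A and B have Kruskal rank at least 1 (no zero columns) and k_A + k_B ≥ F + 1, then A ⊙ B has full column rank F. -/
/-!
If `(A ⊙ B) v = 0` and `s` is the support of `v`, then `A_s · diag(v_s) · B_sᵀ = 0`, where `A_s`,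
`B_s` keep the columns in `s`. As `diag(v_s)` is invertible, Sylvester's inequality gives
`rank A_s + rank B_s ≤ #s`, while every `min(#s, k_A)` columns of `A_s` are independent, so
`rank A_s ≥ min(#s, k_A)`, and likewise for `B`. With `k_A, k_B ≥ 1` and `s ≠ ∅` this forces
`k_A + k_B ≤ #s ≤ F`.
-/

open Matrix

lemma Matrix.rank_eq_card_of_linearIndependent_col {m n R : Type*} [Field R] [Fintype n]
    {M : Matrix m n R} (h : LinearIndependent R M.col) : M.rank = Fintype.card n := by
  rw [rank_eq_finrank_span_cols, finrank_span_eq_card h]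

section KruskalRank

variable {m : Type*} {F : ℕ}

lemma kruskalRank_spec_s13 (A : Matrix m (Fin F) ℝ) :
    kruskalRank A ≤ F ∧ ∀ s : Finset (Fin F), s.card = kruskalRank A →
      LinearIndependent ℝ (fun j : s => fun i => A i (j : Fin F)) := by
  refine Nat.sSup_mem (s := {k | k ≤ F ∧ ∀ s : Finset (Fin F), s.card = k →
      LinearIndependent ℝ (fun j : s => fun i => A i (j : Fin F))})
    ⟨0, Nat.zero_le F, fun s hs => ?_⟩ ⟨F, fun k hk => hk.1⟩
  obtain rfl := Finset.card_eq_zero.mp hs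
  exact linearIndependent_empty_type

lemma linearIndependent_cols_of_card_le_kruskalRank (A : Matrix m (Fin F) ℝ)
    {t : Finset (Fin F)} (ht : t.card ≤ kruskalRank A) :
    LinearIndependent ℝ (fun j : t => fun i => A i (j : Fin F)) := by
  obtain ⟨hkF, hli⟩ := kruskalRank_spec_s13 A
  obtain ⟨u, htu, -, hu⟩ :=
    Finset.exists_subsuperset_card_eq t.subset_univ ht (by simpa using hkF)
  exact (hli u hu).comp (Set.inclusion htu) (Set.inclusion_injective htu)

lemma min_card_kruskalRank_le_rank_submatrix (A : Matrix m (Fin F) ℝ) (s : Finset (Fin F)) :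
    min s.card (kruskalRank A) ≤ (A.submatrix id ((↑) : s → Fin F)).rank := by
  obtain ⟨t, hts, htc⟩ := Finset.exists_subset_card_eq (min_le_left s.card (kruskalRank A))
  have hli := linearIndependent_cols_of_card_le_kruskalRank A (htc.trans_le (min_le_right _ _))
  calc min s.card (kruskalRank A)
      = (A.submatrix id ((↑) : t → Fin F)).rank := by
        rw [rank_eq_card_of_linearIndependent_col (M := A.submatrix id ((↑) : t → Fin F)) hli,
          Fintype.card_coe, htc]
    _ = ((A.submatrix id ((↑) : s → Fin F)).submatrix id (Set.inclusion hts)).rank := rfl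
    _ ≤ (A.submatrix id ((↑) : s → Fin F)).rank := rank_submatrix_le _ _ _

end KruskalRank

lemma Matrix.mul_diagonal_mul_eq_submatrix {l ι n R : Type*} [Fintype ι] [DecidableEq ι]
    [CommSemiring R] (A : Matrix l ι R) (B : Matrix ι n R) (v : ι → R) (s : Finset ι)
    (hv : ∀ i ∉ s, v i = 0) :
    A * diagonal v * B = A.submatrix id ((↑) : s → ι) * diagonal (fun i : s => v i) *
      B.submatrix ((↑) : s → ι) id := by
  ext a b
  simp only [mul_apply, diagonal_apply, mul_ite, mul_zero, Finset.sum_ite_eq', Finset.mem_univ,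
    if_true, submatrix_apply, id]
  rw [Finset.sum_coe_sort s (fun i => A a i * v i * B i b)]
  exact (Finset.sum_subset s.subset_univ fun i _ hi => by simp [hv i hi]).symm

lemma khatriRao_mulVec_apply {I J : Type*} {F : ℕ} (A : Matrix I (Fin F) ℝ)
    (B : Matrix J (Fin F) ℝ) (v : Fin F → ℝ) (i : I) (j : J) :
    (khatriRao A B *ᵥ v) (i, j) = (A * diagonal v * Bᵀ) i j := by
  simp only [mulVec, dotProduct, khatriRao, mul_apply, diagonal_apply, mul_ite, mul_zero,
    Finset.sum_ite_eq', Finset.mem_univ, if_true, transpose_apply]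
  exact Finset.sum_congr rfl fun f _ => by ring

lemma min_card_kruskalRank_add_le_card_of_khatriRao_mulVec_eq_zero {I J : Type*} [Finite I]
    [Fintype J] {F : ℕ} (A : Matrix I (Fin F) ℝ) (B : Matrix J (Fin F) ℝ) (v : Fin F → ℝ)
    (hv : khatriRao A B *ᵥ v = 0) (s : Finset (Fin F)) (hs : ∀ f, f ∈ s ↔ v f ≠ 0) :
    min s.card (kruskalRank A) + min s.card (kruskalRank B) ≤ s.card := by
  have hvs : ∀ f ∉ s, v f = 0 := fun f hf => not_not.mp (mt (hs f).mpr hf)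
  have hprod : A.submatrix id ((↑) : s → Fin F) * diagonal (fun f : s => v f) *
      (B.submatrix id ((↑) : s → Fin F))ᵀ = 0 := by
    rw [transpose_submatrix, ← mul_diagonal_mul_eq_submatrix A Bᵀ v s hvs]
    ext i j
    rw [← khatriRao_mulVec_apply, hv, Pi.zero_apply, Matrix.zero_apply]
  have hdiag : (diagonal (fun f : s => v f)).det ≠ 0 := by
    rw [det_diagonal, Finset.prod_ne_zero_iff]
    exact fun f _ => (hs f).mp f.2
  have hrank := rank_add_rank_le_card_of_mul_eq_zero hprod
  rw [rank_mul_eq_left_of_det_ne_zero _ _ hdiag, rank_transpose, Fintype.card_coe] at hrank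
  have hA := min_card_kruskalRank_le_rank_submatrix A s
  have hB := min_card_kruskalRank_le_rank_submatrix B s
  omega

theorem stmt_13 (I J F : ℕ)
    (A : Matrix (Fin I) (Fin F) ℝ) (B : Matrix (Fin J) (Fin F) ℝ)
    (hA : 1 ≤ kruskalRank A) (hB : 1 ≤ kruskalRank B)
    (hk : kruskalRank A + kruskalRank B ≥ F + 1) :
    ∀ v : Fin F → ℝ, (khatriRao A B).mulVec v = 0 → v = 0 := by
  intro v hv
  by_contra hne
  set s := Finset.univ.filter (v · ≠ 0)
  have hrank := min_card_kruskalRank_add_le_card_of_khatriRao_mulVec_eq_zero A B v hv s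
    (by simp [s])
  have hs : 1 ≤ s.card := Finset.card_pos.mpr <| by
    obtain ⟨f, hf⟩ := Function.ne_iff.mp hne
    exact ⟨f, by simpa [s] using hf⟩
  have hsF : s.card ≤ F := by simpa using Finset.card_le_univ s
  omega
end
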